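/- arXiv:1208.2823 — 2 statements merged into one kernel-verified Lean document; each statement's English description precedes it below -/
import Mathlib

section
/- Let V be a real subspace of ℂ^n and let P : V → V be the real-linear endomorphism P v = π_V(Jv). Then −P² is a self-adjoint positive semidefinite endomorphism of V, every eigenvalue c of −P² satisfies 0 ≤ c ≤ 1, and for each such eigenvalue c the eigenspace W = ker(−P² − c·id) is a real subspace of ℂ^n of constant Kähler angle arccos(√c); that is, ‖π_W(Jw)‖² = c·‖w‖² for every w ∈ W. -/
/-! `P` is the compression of the skew-adjoint isometry `J` to `V`, so it is skew-adjoint with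
`‖P v‖ ≤ ‖v‖`. Hence `⟪-P² v, w⟫ = ⟪P v, P w⟫`: the operator `-P²` is positive, and on its
`c`-eigenspace `W` we get `‖P w‖² = c ‖w‖² ≤ ‖w‖²`, so `0 ≤ c ≤ 1`. Since `P` commutes with `P²` it
preserves `W ⊆ V`, whence `π_W (J w) = π_W (π_V (J w)) = P w` and `‖π_W (J w)‖² = c ‖w‖²`. -/

noncomputable section

/-- `ℂ^n` as a Euclidean space. -/
abbrev En (n : ℕ) : Type := EuclideanSpace ℂ (Fin n)

/-- The complex structure `J`, multiplication by `i`. -/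
def Jc {n : ℕ} (x : En n) : En n := Complex.I • x

/-- A real subspace `V` of `ℂ^n` has constant Kähler angle `φ` if
`‖π_V (J v)‖² = cos²(φ) ‖v‖²` for all `v ∈ V`. -/
def HasConstKahlerAngle {n : ℕ} (V : Submodule ℝ (En n)) (φ : ℝ) : Prop :=
  ∀ v ∈ V, ‖(Submodule.orthogonalProjection V (Jc v) : En n)‖ ^ 2 = Real.cos φ ^ 2 * ‖v‖ ^ 2

open Module.End
open scoped InnerProductSpace

theorem mapsTo_eigenspace_neg_comp_self {R M : Type*} [CommRing R] [AddCommGroup M] [Module R M]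
    (f : Module.End R M) (μ : R) :
    Set.MapsTo f (eigenspace (-(f ∘ₗ f)) μ) (eigenspace (-(f ∘ₗ f)) μ) :=
  mapsTo_genEigenspace_of_comm ((Commute.refl f).mul_left (Commute.refl f)).neg_left μ 1

section SkewAdjoint

variable {F : Type*} [NormedAddCommGroup F] [InnerProductSpace ℝ F] {P : F →ₗ[ℝ] F}

theorem inner_neg_comp_self_apply_left (hP : ∀ v w, ⟪P v, w⟫_ℝ = -⟪v, P w⟫_ℝ) (v w : F) :
    ⟪(-(P ∘ₗ P)) v, w⟫_ℝ = ⟪P v, P w⟫_ℝ := by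
  rw [LinearMap.neg_apply, inner_neg_left, LinearMap.comp_apply, hP, neg_neg]

theorem isPositive_neg_comp_self (hP : ∀ v w, ⟪P v, w⟫_ℝ = -⟪v, P w⟫_ℝ) :
    (-(P ∘ₗ P)).IsPositive := by
  refine ⟨fun v w => ?_, fun v => ?_⟩
  · rw [inner_neg_comp_self_apply_left hP, real_inner_comm, ← inner_neg_comp_self_apply_left hP,
      real_inner_comm]
  · rw [inner_neg_comp_self_apply_left hP]
    exact real_inner_self_nonneg

theorem norm_sq_apply_of_neg_comp_self_apply_eq_smul (hP : ∀ v w, ⟪P v, w⟫_ℝ = -⟪v, P w⟫_ℝ)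
    {c : ℝ} {v : F} (hv : (-(P ∘ₗ P)) v = c • v) : ‖P v‖ ^ 2 = c * ‖v‖ ^ 2 := by
  rw [← real_inner_self_eq_norm_sq, ← inner_neg_comp_self_apply_left hP, hv,
    real_inner_smul_left, real_inner_self_eq_norm_sq]

theorem mem_Icc_of_hasEigenvalue_neg_comp_self (hP : ∀ v w, ⟪P v, w⟫_ℝ = -⟪v, P w⟫_ℝ)
    (hP_le : ∀ v, ‖P v‖ ≤ ‖v‖) {c : ℝ} (hc : HasEigenvalue (-(P ∘ₗ P)) c) : 0 ≤ c ∧ c ≤ 1 := by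
  obtain ⟨v, hv⟩ := hc.exists_hasEigenvector
  have hPv := norm_sq_apply_of_neg_comp_self_apply_eq_smul hP hv.apply_eq_smul
  have hv_pos : 0 < ‖v‖ ^ 2 := by simpa [sq_pos_iff] using hv.2
  have hPv_le : ‖P v‖ ^ 2 ≤ ‖v‖ ^ 2 := pow_le_pow_left₀ (norm_nonneg _) (hP_le v) 2
  constructor <;> nlinarith [sq_nonneg ‖P v‖]

end SkewAdjoint

section Compression

variable {E : Type*} [NormedAddCommGroup E] [InnerProductSpace ℝ E] {J : E → E}
  {K : Submodule ℝ E} [K.HasOrthogonalProjection] {P : K →ₗ[ℝ] K}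

theorem inner_compression_apply_left (hJ : ∀ x y, ⟪J x, y⟫_ℝ = -⟪x, J y⟫_ℝ)
    (hP : ∀ v : K, P v = K.orthogonalProjectionOnto (J v)) (v w : K) :
    ⟪P v, w⟫_ℝ = -⟪v, P w⟫_ℝ := by
  rw [hP, hP, Submodule.inner_orthogonalProjectionOnto_eq_of_mem_right,
    Submodule.inner_orthogonalProjectionOnto_eq_of_mem_left]
  exact hJ _ _

theorem norm_compression_apply_le (hJ : ∀ x, ‖J x‖ ≤ ‖x‖)
    (hP : ∀ v : K, P v = K.orthogonalProjectionOnto (J v)) (v : K) : ‖P v‖ ≤ ‖v‖ :=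
  (hP v ▸ K.norm_orthogonalProjectionOnto_apply_le (J v)).trans (hJ v)

theorem orthogonalProjectionOnto_map_subtype_apply {U : Submodule ℝ K}
    [(U.map K.subtype).HasOrthogonalProjection] (hU : Set.MapsTo P U U)
    (hP : ∀ v : K, P v = K.orthogonalProjectionOnto (J v)) {v : K} (hv : v ∈ U) :
    ((U.map K.subtype).orthogonalProjectionOnto (J v) : E) = P v := by
  rw [← Submodule.orthogonalProjectionOnto_starProjection_of_le (Submodule.map_subtype_le K U),
    K.starProjection_apply, ← hP v]
  exact Submodule.starProjection_eq_self_iff.mpr ⟨P v, hU hv, rfl⟩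

end Compression

theorem inner_Jc_left {n : ℕ} (x y : En n) : ⟪Jc x, y⟫_ℝ = -⟪x, Jc y⟫_ℝ := by
  simp only [Jc, PiLp.inner_apply, ← Finset.sum_neg_distrib]
  refine Finset.sum_congr rfl fun i _ => ?_
  simp [Complex.inner, Complex.mul_re, Complex.mul_im]
  ring

theorem norm_Jc {n : ℕ} (x : En n) : ‖Jc x‖ = ‖x‖ := by
  simp [Jc, norm_smul]

theorem hasConstKahlerAngle_arccos_sqrt {n : ℕ} {V : Submodule ℝ (En n)} {c : ℝ} (hc₀ : 0 ≤ c)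
    (hc₁ : c ≤ 1) (hV : ∀ v ∈ V, ‖(V.orthogonalProjectionOnto (Jc v) : En n)‖ ^ 2 = c * ‖v‖ ^ 2) :
    HasConstKahlerAngle V (Real.arccos √c) := by
  rwa [HasConstKahlerAngle, Real.cos_arccos (by linarith [Real.sqrt_nonneg c])
    (Real.sqrt_le_one.mpr hc₁), Real.sq_sqrt hc₀]

/-- For `P = π_V ∘ J` on a real subspace `V` of `ℂ^n`, the operator `-P²` is
self-adjoint and positive semidefinite, its eigenvalues lie in `[0,1]`, and each
eigenspace, viewed as a real subspace of `ℂ^n`, has constant Kähler angle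
`arccos √c`. -/
theorem neg_P_sq_selfAdjoint_psd_eigenspaces (n : ℕ) (V : Submodule ℝ (En n))
    (P : V →ₗ[ℝ] V) (hP : ∀ v : V, P v = Submodule.orthogonalProjection V (Jc (v : En n))) :
    (∀ v w : V, (inner ℝ ((-(P ∘ₗ P)) v) w : ℝ) = inner ℝ v ((-(P ∘ₗ P)) w)) ∧
    (∀ v : V, 0 ≤ (inner ℝ ((-(P ∘ₗ P)) v) v : ℝ)) ∧
    (∀ c : ℝ, Module.End.HasEigenvalue (-(P ∘ₗ P)) c → 0 ≤ c ∧ c ≤ 1) ∧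
    (∀ c : ℝ, Module.End.HasEigenvalue (-(P ∘ₗ P)) c →
      HasConstKahlerAngle ((Module.End.eigenspace (-(P ∘ₗ P)) c).map V.subtype)
        (Real.arccos (Real.sqrt c)) ∧
      ∀ w ∈ (Module.End.eigenspace (-(P ∘ₗ P)) c).map V.subtype,
        ‖(Submodule.orthogonalProjection ((Module.End.eigenspace (-(P ∘ₗ P)) c).map V.subtype)
            (Jc w) : En n)‖ ^ 2 = c * ‖w‖ ^ 2) := by
  have hskew := inner_compression_apply_left inner_Jc_left hP
  have hpos := isPositive_neg_comp_self (F := V) hskew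
  have hbound (c : ℝ) (hc : HasEigenvalue (-(P ∘ₗ P)) c) : 0 ≤ c ∧ c ≤ 1 :=
    mem_Icc_of_hasEigenvalue_neg_comp_self hskew
      (norm_compression_apply_le (fun x => (norm_Jc x).le) hP) hc
  have hangle (c : ℝ) : ∀ w ∈ (eigenspace (-(P ∘ₗ P)) c).map V.subtype,
      ‖(((eigenspace (-(P ∘ₗ P)) c).map V.subtype).orthogonalProjectionOnto (Jc w) : En n)‖ ^ 2 =
        c * ‖w‖ ^ 2 := by
    rintro _ ⟨v, hv : v ∈ eigenspace (-(P ∘ₗ P)) c, rfl⟩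
    rw [Submodule.subtype_apply, orthogonalProjectionOnto_map_subtype_apply
      (mapsTo_eigenspace_neg_comp_self P c) hP hv, Submodule.norm_coe, Submodule.norm_coe]
    exact norm_sq_apply_of_neg_comp_self_apply_eq_smul (F := V) hskew (mem_eigenspace_iff.mp hv)
  refine ⟨hpos.isSymmetric, hpos.re_inner_nonneg_left, hbound, fun c hc => ⟨?_, hangle c⟩⟩
  exact hasConstKahlerAngle_arccos_sqrt (hbound c hc).1 (hbound c hc).2 (hangle c)
end
end

section
/- Let V and W be real subspaces of ℂ^n with the same real dimension, both of constant Kähler angle φ for the same φ ∈ [0, π/2]. Then V and W are congruent under the unitary group: there exists a complex-linear isometric automorphism A of ℂ^n with A(V) = W. -/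
noncomputable section

/-!
On a real subspace `V` of constant Kähler angle `φ`, the operator `π_V ∘ J` is skew-adjoint and,
by polarization, squares to `-cos² φ`. If `cos φ = 0`, every real orthonormal basis of `V` is
unitary. Otherwise `K = (cos φ)⁻¹ π_V ∘ J` is an orthogonal complex structure on `V`, so `V` has an
orthonormal basis `e₁, …, eₘ, K e₁, …, K eₘ`, whose Hermitian Gram matrix depends only on `m` and
`φ`. Either way `V` and `W` are spanned by families with the same Hermitian Gram matrix, and a
correspondence between two such families extends to a unitary transformation of `ℂⁿ`.
-/

open InnerProductSpace Matrix Module Submodule Set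

theorem exists_linearIsometryEquiv_apply_eq_of_gram_eq {𝕜 E ι : Type*} [RCLike 𝕜]
    [NormedAddCommGroup E] [InnerProductSpace 𝕜 E] [FiniteDimensional 𝕜 E] [Fintype ι]
    {f g : ι → E} (h : gram 𝕜 f = gram 𝕜 g) : ∃ A : E ≃ₗᵢ[𝕜] E, ∀ i, A (f i) = g i := by
  classical
  set F := Fintype.linearCombination 𝕜 f
  set G := Fintype.linearCombination 𝕜 g
  have hFG (a b : ι → 𝕜) : ⟪F a, F b⟫_𝕜 = ⟪G a, G b⟫_𝕜 := by
    simp only [F, G, Fintype.linearCombination_apply, ← star_dotProduct_gram_mulVec, h]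
  have hker : LinearMap.ker F ≤ LinearMap.ker G := fun a ha => by
    rw [LinearMap.mem_ker, ← inner_self_eq_zero (𝕜 := 𝕜), ← hFG, LinearMap.mem_ker.1 ha,
      inner_zero_left]
  let L : LinearMap.range F →ₗ[𝕜] E :=
    (LinearMap.ker F).liftQ G hker ∘ₗ F.quotKerEquivRange.symm.toLinearMap
  have hL (a : ι → 𝕜) : L ⟨F a, F.mem_range_self a⟩ = G a := by
    simp [L, LinearMap.quotKerEquivRange_symm_apply_image]
  have hnorm : ∀ x, ‖L x‖ = ‖x‖ := by
    rintro ⟨_, a, rfl⟩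
    rw [hL, coe_norm, norm_eq_sqrt_re_inner (𝕜 := 𝕜), norm_eq_sqrt_re_inner (𝕜 := 𝕜), hFG]
  let L' : LinearMap.range F →ₗᵢ[𝕜] E := ⟨L, hnorm⟩
  refine ⟨L'.extend.toLinearIsometryEquiv rfl, fun i => ?_⟩
  simpa [F, G] using (L'.extend_apply ⟨F (Pi.single i 1), F.mem_range_self _⟩).trans (hL _)

theorem LinearIsometryEquiv.image_span_range_eq {E ι : Type*} [NormedAddCommGroup E]
    [InnerProductSpace ℂ E] [Module ℝ E] [IsScalarTower ℝ ℂ E] (A : E ≃ₗᵢ[ℂ] E)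
    {f g : ι → E} (h : ∀ i, A (f i) = g i) :
    ⇑A '' span ℝ (range f) = span ℝ (range g) := by
  rw [← (funext h : ⇑A ∘ f = g), range_comp]
  let L := (A : E →ₗ[ℂ] E).restrictScalars ℝ
  exact (map_coe L _).symm.trans (congrArg _ (span_image L).symm)

theorem Submodule.inner_starProjection_left_of_mem {𝕜 E : Type*} [RCLike 𝕜]
    [NormedAddCommGroup E] [InnerProductSpace 𝕜 E] (K : Submodule 𝕜 E) [K.HasOrthogonalProjection]
    (x : E) {y : E} (hy : y ∈ K) : ⟪K.starProjection x, y⟫_𝕜 = ⟪x, y⟫_𝕜 := by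
  rw [inner_starProjection_left_eq_right, starProjection_eq_self_iff.2 hy]

theorem mem_orthogonal_span_pair_iff {𝕜 E : Type*} [RCLike 𝕜] [NormedAddCommGroup E]
    [InnerProductSpace 𝕜 E] {a b y : E} :
    y ∈ (span 𝕜 {a, b})ᗮ ↔ ⟪a, y⟫_𝕜 = 0 ∧ ⟪b, y⟫_𝕜 = 0 := by
  rw [span_insert, ← inf_orthogonal, mem_inf, mem_orthogonal_singleton_iff_inner_right,
    mem_orthogonal_singleton_iff_inner_right]

section ComplexStructure

variable {E : Type*} [NormedAddCommGroup E] [InnerProductSpace ℝ E]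

theorem orthonormal_sumElim_iff {ι κ : Type*} {v : ι → E} {w : κ → E} :
    Orthonormal ℝ (Sum.elim v w) ↔
      Orthonormal ℝ v ∧ Orthonormal ℝ w ∧ ∀ i j, ⟪v i, w j⟫_ℝ = 0 := by
  classical
  simp only [orthonormal_iff_ite, Sum.forall, Sum.elim_inl, Sum.elim_inr, Sum.inl.injEq,
    Sum.inr.injEq, reduceCtorEq, if_false, forall_and]
  constructor
  · rintro ⟨⟨hv, -⟩, hvw, hw⟩
    exact ⟨hv, hw, hvw⟩
  · rintro ⟨hv, hw, hvw⟩
    exact ⟨⟨hv, fun j i => by rw [real_inner_comm, hvw]⟩, hvw, hw⟩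

variable {K : E → E} {U : Submodule ℝ E}

theorem orthonormal_sumElim_cons {m : ℕ} {u : E} {e : Fin m → E} (hu : ‖u‖ = 1)
    (hKu : ‖K u‖ = 1) (huKu : ⟪u, K u⟫_ℝ = 0) (he : Orthonormal ℝ (Sum.elim e (K ∘ e)))
    (horth : ∀ y ∈ range (Sum.elim e (K ∘ e)), ⟪u, y⟫_ℝ = 0 ∧ ⟪K u, y⟫_ℝ = 0) :
    Orthonormal ℝ (Sum.elim (Fin.cons u e : Fin (m + 1) → E) (K ∘ Fin.cons u e)) := by
  obtain ⟨he, hKe, heKe⟩ := orthonormal_sumElim_iff.1 he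
  refine orthonormal_sumElim_iff.2 ⟨?_, ?_, ?_⟩
  · exact orthonormal_vecCons_iff.2 ⟨hu, fun j => (horth _ ⟨.inl j, rfl⟩).1, he⟩
  · rw [Fin.comp_cons]
    exact orthonormal_vecCons_iff.2 ⟨hKu, fun j => (horth _ ⟨.inr j, rfl⟩).2, hKe⟩
  · refine Fin.cases (Fin.cases huKu fun j => (horth _ ⟨.inr j, rfl⟩).1) fun i => ?_
    refine Fin.cases ?_ (heKe i)
    simpa [real_inner_comm] using (horth _ ⟨.inl i, rfl⟩).2

theorem real_inner_apply_apply_of_sq_eq_neg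
    (hU : ∀ x ∈ U, K x ∈ U) (hskew : ∀ x ∈ U, ∀ y ∈ U, ⟪K x, y⟫_ℝ = -⟪x, K y⟫_ℝ)
    (hsq : ∀ x ∈ U, K (K x) = -x) {x y : E} (hx : x ∈ U) (hy : y ∈ U) :
    ⟪K x, K y⟫_ℝ = ⟪x, y⟫_ℝ := by
  rw [hskew x hx (K y) (hU y hy), hsq y hy, inner_neg_right, neg_neg]

theorem apply_mem_orthogonal_span_pair_inf
    (hU : ∀ x ∈ U, K x ∈ U) (hskew : ∀ x ∈ U, ∀ y ∈ U, ⟪K x, y⟫_ℝ = -⟪x, K y⟫_ℝ)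
    (hsq : ∀ x ∈ U, K (K x) = -x) {u y : E} (hu : u ∈ U)
    (hy : y ∈ (span ℝ {u, K u})ᗮ ⊓ U) : K y ∈ (span ℝ {u, K u})ᗮ ⊓ U := by
  obtain ⟨hy, hyU⟩ := mem_inf.1 hy
  obtain ⟨huy, hKuy⟩ := mem_orthogonal_span_pair_iff.1 hy
  refine mem_inf.2 ⟨mem_orthogonal_span_pair_iff.2 ⟨?_, ?_⟩, hU y hyU⟩
  · rw [← neg_eq_zero, ← hskew u hu y hyU, hKuy]
  · rw [real_inner_apply_apply_of_sq_eq_neg hU hskew hsq hu hyU, huy]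

variable [FiniteDimensional ℝ E]

theorem exists_orthonormal_sumElim_span_eq
    (hU : ∀ x ∈ U, K x ∈ U) (hskew : ∀ x ∈ U, ∀ y ∈ U, ⟪K x, y⟫_ℝ = -⟪x, K y⟫_ℝ)
    (hsq : ∀ x ∈ U, K (K x) = -x) :
    ∃ (m : ℕ) (e : Fin m → E),
      Orthonormal ℝ (Sum.elim e (K ∘ e)) ∧ span ℝ (range (Sum.elim e (K ∘ e))) = U := by
  induction hd : finrank ℝ U using Nat.strong_induction_on generalizing U with
  | _ d ih =>
  rcases eq_or_ne U ⊥ with rfl | hbot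
  · exact ⟨0, Fin.elim0, Orthonormal.of_isEmpty _, by simp⟩
  obtain ⟨x, hxU, hx0⟩ := exists_mem_ne_zero_of_ne_bot hbot
  obtain ⟨u, huU, hu⟩ : ∃ u ∈ U, ‖u‖ = 1 :=
    ⟨‖x‖⁻¹ • x, U.smul_mem _ hxU, by simp [norm_smul, hx0]⟩
  have huKu : ⟪u, K u⟫_ℝ = 0 := by
    have := hskew u huU u huU
    rw [real_inner_comm] at this
    linarith
  set U' := (span ℝ {u, K u})ᗮ ⊓ U
  have hU'U : U' ≤ U := inf_le_right
  have hlt : finrank ℝ U' < d := by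
    refine hd ▸ finrank_lt_finrank_of_lt (lt_of_le_of_ne hU'U fun h => ?_)
    have := (mem_orthogonal_span_pair_iff.1 (mem_inf.1 (h ▸ huU)).1).1
    rw [real_inner_self_eq_norm_sq, hu] at this
    norm_num at this
  obtain ⟨m, e, he, hspan⟩ := ih _ hlt
    (fun y hy => apply_mem_orthogonal_span_pair_inf hU hskew hsq huU hy)
    (fun x hx y hy => hskew x (hU'U hx) y (hU'U hy)) (fun x hx => hsq x (hU'U hx)) rfl
  refine ⟨m + 1, Fin.cons u e, orthonormal_sumElim_cons hu ?_ huKu he fun y hy => ?_, ?_⟩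
  · rw [← sq_eq_sq₀ (norm_nonneg _) zero_le_one, one_pow, ← real_inner_self_eq_norm_sq,
      real_inner_apply_apply_of_sq_eq_neg hU hskew hsq huU huU, real_inner_self_eq_norm_sq, hu,
      one_pow]
  · exact mem_orthogonal_span_pair_iff.1 (mem_inf.1 (hspan ▸ subset_span hy)).1
  · have hrange : range (Sum.elim (Fin.cons u e : Fin (m + 1) → E) (K ∘ Fin.cons u e)) =
        {u, K u} ∪ range (Sum.elim e (K ∘ e)) := by
      simp only [Set.Sum.elim_range, Fin.comp_cons, Fin.range_cons]
      ext
      simp only [mem_union, mem_insert_iff, mem_singleton_iff]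
      tauto
    have hSU : span ℝ {u, K u} ≤ U := span_le.2 (by simp [insert_subset_iff, huU, hU u huU])
    rw [hrange, span_union, hspan, sup_orthogonal_inf_of_hasOrthogonalProjection hSU]

end ComplexStructure

theorem real_inner_map_map_of_norm_sq_eq {E F : Type*} [NormedAddCommGroup E]
    [InnerProductSpace ℝ E] [NormedAddCommGroup F] [InnerProductSpace ℝ F] (T : E →+ F)
    {V : Submodule ℝ E} {c : ℝ} (h : ∀ v ∈ V, ‖T v‖ ^ 2 = c * ‖v‖ ^ 2) {x y : E}
    (hx : x ∈ V) (hy : y ∈ V) : ⟪T x, T y⟫_ℝ = c * ⟪x, y⟫_ℝ := by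
  have := h (x + y) (add_mem hx hy)
  rw [map_add, norm_add_sq_real, norm_add_sq_real, h x hx, h y hy] at this
  linarith

theorem EuclideanSpace.real_inner_eq_re_inner {ι : Type*} [Fintype ι]
    (x y : EuclideanSpace ℂ ι) : ⟪x, y⟫_ℝ = (⟪x, y⟫_ℂ).re := by
  simp [PiLp.inner_apply, Complex.re_sum]

section Kahler

variable {n : ℕ} {V : Submodule ℝ (En n)} {φ : ℝ}

theorem inner_eq_real_inner_add_real_inner_Jc_mul_I (x y : En n) :
    ⟪x, y⟫_ℂ = ⟪x, y⟫_ℝ + ⟪Jc x, y⟫_ℝ * Complex.I := by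
  apply Complex.ext <;> simp [EuclideanSpace.real_inner_eq_re_inner, Jc]

theorem real_inner_Jc_left (x y : En n) : ⟪Jc x, y⟫_ℝ = -⟪x, Jc y⟫_ℝ := by
  simp [EuclideanSpace.real_inner_eq_re_inner, Jc]

theorem real_inner_starProjection_Jc_left {x y : En n} (hx : x ∈ V) (hy : y ∈ V) :
    ⟪V.starProjection (Jc x), y⟫_ℝ = -⟪x, V.starProjection (Jc y)⟫_ℝ := by
  rw [V.inner_starProjection_left_of_mem _ hy, real_inner_Jc_left, real_inner_comm (Jc y),
    real_inner_comm (V.starProjection _), V.inner_starProjection_left_of_mem _ hx]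

theorem real_inner_starProjection_Jc_starProjection_Jc (hV : HasConstKahlerAngle V φ)
    {x y : En n} (hx : x ∈ V) (hy : y ∈ V) :
    ⟪V.starProjection (Jc x), V.starProjection (Jc y)⟫_ℝ = Real.cos φ ^ 2 * ⟪x, y⟫_ℝ :=
  real_inner_map_map_of_norm_sq_eq
    ((V.starProjection : En n →+ En n).comp (DistribSMul.toAddMonoidHom _ Complex.I)) hV hx hy

theorem starProjection_Jc_starProjection_Jc (hV : HasConstKahlerAngle V φ) {x : En n}
    (hx : x ∈ V) : V.starProjection (Jc (V.starProjection (Jc x))) = -(Real.cos φ ^ 2 • x) := by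
  set z := V.starProjection (Jc (V.starProjection (Jc x))) + Real.cos φ ^ 2 • x
  have hz : z ∈ V := add_mem (V.starProjection_apply_mem _) (V.smul_mem _ hx)
  have : ⟪z, z⟫_ℝ = 0 := by
    rw [inner_add_left, real_inner_starProjection_Jc_left (V.starProjection_apply_mem _) hz,
      real_inner_starProjection_Jc_starProjection_Jc hV hx hz, real_inner_smul_left]
    ring
  rwa [inner_self_eq_zero, add_eq_zero_iff_eq_neg] at this

theorem starProjection_Jc_eq_zero (hV : HasConstKahlerAngle V φ) (hc : Real.cos φ = 0)
    {x : En n} (hx : x ∈ V) : V.starProjection (Jc x) = 0 := by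
  have := hV x hx
  rw [hc] at this
  simpa using this

theorem exists_gram_eq_one_of_cos_eq_zero (hV : HasConstKahlerAngle V φ)
    (hc : Real.cos φ = 0) {d : ℕ} (hd : finrank ℝ V = d) :
    ∃ f : Fin d → En n, span ℝ (range f) = V ∧ gram ℂ f = 1 := by
  set b := (stdOrthonormalBasis ℝ V).reindex (finCongr hd)
  refine ⟨fun i => b i, ?_, ?_⟩
  · rw [show (fun i => (b i : En n)) = V.subtype ∘ b from rfl, range_comp, span_image,
      ← b.coe_toBasis, b.toBasis.span_eq, map_subtype_top]
  · rw [gram_eq_one_iff_orthonormal, orthonormal_iff_ite]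
    intro i j
    rw [inner_eq_real_inner_add_real_inner_Jc_mul_I,
      ← V.inner_starProjection_left_of_mem (Jc (b i : En n)) (b j).2,
      starProjection_Jc_eq_zero hV hc (b i).2, inner_zero_left, ← coe_inner,
      orthonormal_iff_ite.1 b.orthonormal i j]
    split_ifs <;> simp

theorem exists_gram_eq_fromBlocks_of_cos_ne_zero (hV : HasConstKahlerAngle V φ)
    (hc : Real.cos φ ≠ 0) :
    ∃ (m : ℕ) (f : Fin m ⊕ Fin m → En n), m + m = finrank ℝ V ∧ span ℝ (range f) = V ∧
      gram ℂ f = fromBlocks 1 ((Real.cos φ * Complex.I) • 1) (-(Real.cos φ * Complex.I) • 1) 1 := by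
  set K : En n → En n := fun x => (Real.cos φ)⁻¹ • V.starProjection (Jc x)
  have hKV : ∀ x ∈ V, K x ∈ V := fun x _ => V.smul_mem _ (V.starProjection_apply_mem _)
  have hskew : ∀ x ∈ V, ∀ y ∈ V, ⟪K x, y⟫_ℝ = -⟪x, K y⟫_ℝ := fun x hx y hy => by
    simp only [K, real_inner_smul_left, real_inner_smul_right,
      real_inner_starProjection_Jc_left hx hy, mul_neg]
  have hsq : ∀ x ∈ V, K (K x) = -x := fun x hx => by
    have h := starProjection_Jc_starProjection_Jc hV hx
    simp only [Jc] at h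
    simp only [K, Jc, smul_comm Complex.I, map_smul, h, smul_neg, smul_smul]
    field_simp
    simp
  have hJK : ∀ x, ∀ y ∈ V, ⟪Jc x, y⟫_ℝ = Real.cos φ * ⟪K x, y⟫_ℝ := fun x y hy => by
    rw [real_inner_smul_left, mul_inv_cancel_left₀ hc, V.inner_starProjection_left_of_mem _ hy]
  obtain ⟨m, e, ho, hspan⟩ := exists_orthonormal_sumElim_span_eq hKV hskew hsq
  refine ⟨m, _, ?_, hspan, ?_⟩
  · rw [← hspan, finrank_span_eq_card ho.linearIndependent, Fintype.card_sum, Fintype.card_fin]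
  · have he : ∀ i, e i ∈ V := fun i => hspan ▸ subset_span ⟨.inl i, rfl⟩
    obtain ⟨hee, hKe, heKe⟩ := orthonormal_sumElim_iff.1 ho
    rw [orthonormal_iff_ite] at hee hKe
    simp only [Function.comp_apply] at hKe heKe
    have hKee : ∀ i j, ⟪K (e i), e j⟫_ℝ = 0 := fun i j => by rw [real_inner_comm, heKe]
    ext (i | i) (j | j) <;>
      simp only [gram_apply, Sum.elim_inl, Sum.elim_inr, Function.comp_apply,
        fromBlocks_apply₁₁, fromBlocks_apply₁₂, fromBlocks_apply₂₁, fromBlocks_apply₂₂,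
        Matrix.smul_apply, one_apply, inner_eq_real_inner_add_real_inner_Jc_mul_I,
        hJK _ _ (he _), hJK _ _ (hKV _ (he _)), hsq _ (he _), inner_neg_left, hee, hKe, heKe,
        hKee] <;>
      split_ifs <;> simp

end Kahler

theorem congruent_of_same_dim_same_kahler_angle_general (n : ℕ)
    (V W : Submodule ℝ (En n))
    (φ : ℝ)
    (hdim : Module.finrank ℝ V = Module.finrank ℝ W)
    (hV : HasConstKahlerAngle V φ) (hW : HasConstKahlerAngle W φ) :
    ∃ A : En n ≃ₗᵢ[ℂ] En n, ⇑A '' (V : Set (En n)) = (W : Set (En n)) := by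
  obtain ⟨ι, _, f, g, rfl, rfl, hfg⟩ : ∃ (ι : Type) (_ : Fintype ι) (f g : ι → En n),
      span ℝ (range f) = V ∧ span ℝ (range g) = W ∧ gram ℂ f = gram ℂ g := by
    rcases eq_or_ne (Real.cos φ) 0 with hc | hc
    · obtain ⟨f, hfV, hf⟩ := exists_gram_eq_one_of_cos_eq_zero hV hc rfl
      obtain ⟨g, hgW, hg⟩ := exists_gram_eq_one_of_cos_eq_zero hW hc hdim.symm
      exact ⟨_, inferInstance, f, g, hfV, hgW, hf.trans hg.symm⟩
    · obtain ⟨m, f, hm, hfV, hf⟩ := exists_gram_eq_fromBlocks_of_cos_ne_zero hV hc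
      obtain ⟨m', g, hm', hgW, hg⟩ := exists_gram_eq_fromBlocks_of_cos_ne_zero hW hc
      obtain rfl : m = m' := by omega
      exact ⟨_, inferInstance, f, g, hfV, hgW, hf.trans hg.symm⟩
  obtain ⟨A, hA⟩ := exists_linearIsometryEquiv_apply_eq_of_gram_eq hfg
  exact ⟨A, A.image_span_range_eq hA⟩

/-- Two real subspaces of `ℂ^n` of the same real dimension and the same constant
Kähler angle are congruent under the unitary group of `ℂ^n`. -/
theorem congruent_of_same_dim_same_kahler_angle (n : ℕ)
    (V W : Submodule ℝ (En n))
    (φ : ℝ) (hφ0 : 0 ≤ φ) (hφ1 : φ ≤ Real.pi / 2)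
    (hdim : Module.finrank ℝ V = Module.finrank ℝ W)
    (hV : HasConstKahlerAngle V φ) (hW : HasConstKahlerAngle W φ) :
    ∃ A : En n ≃ₗᵢ[ℂ] En n, ⇑A '' (V : Set (En n)) = (W : Set (En n)) :=
  congruent_of_same_dim_same_kahler_angle_general n V W φ hdim hV hW
end
end
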